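/- arXiv:0802.3860 — 3 statements merged into one kernel-verified Lean document; each statement's English description precedes it below -/
import Mathlib

section
/- Let k ≥ 1 and let X, Y_1, …, Y_k be finite non-empty sets, Z = X × Y_1 × ⋯ × Y_k. Let F : Z → {−1,1} and let Γ ⊆ Z be a cylinder intersection (with respect to the k+1 coordinates of Z). Then (E_{x,ȳ}[F(x,ȳ)·1_Γ(x,ȳ)])^{2^k} ≤ E_{ȳ⁰,ȳ¹}[ | E_x[ ∏_{u∈{0,1}^k} F(x, y_1^{u_1}, …, y_k^{u_k}) ] | ], where x is uniform over X, ȳ = (y_1,…,y_k) is uniform over Y_1 × ⋯ × Y_k, and ȳ⁰ = (y_1⁰,…,y_k⁰), ȳ¹ = (y_1¹,…,y_k¹) are independent uniform elements of Y_1 × ⋯ × Y_k. -/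
open Finset

set_option linter.unusedSectionVars false
set_option linter.unusedVariables false

namespace BNSaux

variable {k : ℕ} {X : Type} {Y : Fin k → Type}

/-- merged point -/
def mrg (y0 y1 : ∀ i, Y i) (u : Fin k → Bool) : ∀ i, Y i :=
  fun i => if u i then y1 i else y0 i

/-- set of boolean vectors supported on `s` -/
def USet (k : ℕ) (s : Finset (Fin k)) : Finset (Fin k → Bool) :=
  Fintype.piFinset (fun j => if j ∈ s then (Finset.univ : Finset Bool) else {false})

lemma mem_USet {s : Finset (Fin k)} {u : Fin k → Bool} :
    u ∈ USet k s ↔ ∀ j ∉ s, u j = false := by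
  simp only [USet, Fintype.mem_piFinset]
  constructor
  · intro h j hj
    have := h j
    rw [if_neg hj] at this
    simpa using this
  · intro h j
    by_cases hj : j ∈ s
    · simp [hj]
    · simp [hj, h j hj]

lemma USet_empty : USet k ∅ = {fun _ => false} := by
  ext u
  simp only [mem_USet, Finset.mem_singleton]
  constructor
  · intro h; funext j; exact h j (by simp)
  · intro h j _; rw [h]

lemma USet_univ : USet k Finset.univ = Finset.univ := by
  ext u; simp [mem_USet]

lemma mrg_false (y0 y1 : ∀ i, Y i) : mrg y0 y1 (fun _ => false) = y0 := by
  funext j; simp [mrg]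

lemma mrg_upd_left (y0 y1 : ∀ i, Y i) {u : Fin k → Bool} {i : Fin k} (hu : u i = false)
    (a : Y i) : mrg (Function.update y0 i a) y1 u = Function.update (mrg y0 y1 u) i a := by
  funext j
  rcases eq_or_ne j i with rfl | hj
  · simp [mrg, hu]
  · simp [mrg, Function.update_of_ne hj]

lemma mrg_upd_both_false (y0 y1 : ∀ i, Y i) {u : Fin k → Bool} {i : Fin k} (hu : u i = false)
    (a b : Y i) :
    mrg (Function.update y0 i a) (Function.update y1 i b) u
      = Function.update (mrg y0 y1 u) i a := by
  funext j
  rcases eq_or_ne j i with rfl | hj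
  · simp [mrg, hu]
  · simp [mrg, Function.update_of_ne hj]

lemma mrg_upd_both_true (y0 y1 : ∀ i, Y i) (u : Fin k → Bool) {i : Fin k}
    (a b : Y i) :
    mrg (Function.update y0 i a) (Function.update y1 i b) (Function.update u i true)
      = Function.update (mrg y0 y1 u) i b := by
  funext j
  rcases eq_or_ne j i with rfl | hj
  · simp [mrg]
  · simp [mrg, Function.update_of_ne hj]

/-- resampling a coordinate -/
lemma sum_update [∀ i, Fintype (Y i)] (i : Fin k) (f : (∀ j, Y j) → ℝ) :
    ∑ y : ∀ j, Y j, ∑ a : Y i, f (Function.update y i a)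
      = (Fintype.card (Y i) : ℝ) * ∑ y : ∀ j, Y j, f y := by
  have hinv : Function.Involutive
      (fun p : (∀ j, Y j) × Y i => (Function.update p.1 i p.2, p.1 i)) := by
    rintro ⟨y, a⟩
    simp [Function.update_idem, Function.update_eq_self]
  calc ∑ y : ∀ j, Y j, ∑ a : Y i, f (Function.update y i a)
      = ∑ p : (∀ j, Y j) × Y i, f (Function.update p.1 i p.2) := by
        rw [Fintype.sum_prod_type]
    _ = ∑ p : (∀ j, Y j) × Y i, f p.1 :=
        Fintype.sum_bijective _ hinv.bijective _ _ (fun p => rfl)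
    _ = (Fintype.card (Y i) : ℝ) * ∑ y : ∀ j, Y j, f y := by
        rw [Fintype.sum_prod_type]
        simp only [Finset.sum_const, Finset.card_univ, nsmul_eq_mul, ← Finset.mul_sum]
        try exact Finset.sum_congr rfl fun y _ => mul_comm _ _

lemma sum_rotate {A B C : Type} [Fintype A] [Fintype B] [Fintype C] (f : A → B → C → ℝ) :
    ∑ a : A, ∑ b : B, ∑ c : C, f a b c = ∑ b : B, ∑ c : C, ∑ a : A, f a b c := by
  rw [Finset.sum_comm]
  exact Finset.sum_congr rfl fun b _ => Finset.sum_comm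

lemma ind_congr {α : Type*} {A : Set α} {z z' : α} (h : z ∈ A ↔ z' ∈ A) :
    A.indicator (fun _ => (1 : ℝ)) z = A.indicator (fun _ => (1 : ℝ)) z' := by
  by_cases hz : z' ∈ A
  · rw [Set.indicator_of_mem (h.2 hz), Set.indicator_of_mem hz]
  · rw [Set.indicator_of_notMem (fun hz' => hz (h.1 hz')), Set.indicator_of_notMem hz]

lemma ind_nonneg {α : Type*} (A : Set α) (z : α) :
    0 ≤ A.indicator (fun _ => (1 : ℝ)) z := by
  by_cases hz : z ∈ A
  · rw [Set.indicator_of_mem hz]; norm_num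
  · rw [Set.indicator_of_notMem hz]

lemma ind_le_one {α : Type*} (A : Set α) (z : α) :
    A.indicator (fun _ => (1 : ℝ)) z ≤ 1 := by
  by_cases hz : z ∈ A
  · rw [Set.indicator_of_mem hz]
  · rw [Set.indicator_of_notMem hz]; norm_num

/-- splitting the product over `USet (insert i s)` -/
lemma prod_USet_insert {s : Finset (Fin k)} {i : Fin k} (hi : i ∉ s)
    (g : (Fin k → Bool) → ℝ) :
    ∏ u ∈ USet k (insert i s), g u
      = ∏ u ∈ USet k s, (g u * g (Function.update u i true)) := by
  have h1 : ∀ u ∈ USet k s, u i = false := fun u hu => (mem_USet.1 hu) i hi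
  calc ∏ u ∈ USet k (insert i s), g u
      = ∏ p ∈ (USet k s) ×ˢ (Finset.univ : Finset Bool),
          g (Function.update p.1 i p.2) := by
        refine Eq.symm (Finset.prod_nbij' (i := fun p => Function.update p.1 i p.2)
          (j := fun v => (Function.update v i false, v i)) ?_ ?_ ?_ ?_ ?_)
        · intro p hp
          rw [Finset.mem_product] at hp
          rw [mem_USet]
          intro j hj
          have hji : j ≠ i := fun h => hj (h ▸ Finset.mem_insert_self i s)
          show Function.update p.1 i p.2 j = false
          rw [Function.update_of_ne hji]
          exact (mem_USet.1 hp.1) j (fun h => hj (Finset.mem_insert_of_mem h))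
        · intro v hv
          rw [Finset.mem_product]
          refine ⟨?_, Finset.mem_univ _⟩
          rw [mem_USet]
          intro j hj
          show Function.update v i false j = false
          rcases eq_or_ne j i with rfl | hji
          · simp
          · rw [Function.update_of_ne hji]
            exact (mem_USet.1 hv) j (fun h => (Finset.mem_insert.1 h).elim hji hj)
        · intro p hp
          rw [Finset.mem_product] at hp
          have hpf : p.1 i = false := h1 p.1 hp.1
          have : Function.update (Function.update p.1 i p.2) i false = p.1 := by
            rw [Function.update_idem, ← hpf, Function.update_eq_self]
          simp [this]
        · intro v hv
          simp [Function.update_idem, Function.update_eq_self]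
        · intro p hp
          rfl
    _ = ∏ u ∈ USet k s, (g u * g (Function.update u i true)) := by
        rw [Finset.prod_product]
        refine Finset.prod_congr rfl fun u hu => ?_
        rw [Fintype.prod_bool, mul_comm]
        congr 1
        rw [← h1 u hu, Function.update_eq_self]


lemma sum_update2 [∀ i, Fintype (Y i)] (i : Fin k)
    (f : (∀ j, Y j) → (∀ j, Y j) → ℝ) :
    ∑ y0 : ∀ j, Y j, ∑ y1 : ∀ j, Y j, ∑ a : Y i, ∑ b : Y i,
        f (Function.update y0 i a) (Function.update y1 i b)
      = ((Fintype.card (Y i) : ℝ))^2 * ∑ y0 : ∀ j, Y j, ∑ y1 : ∀ j, Y j, f y0 y1 := by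
  set n : ℝ := (Fintype.card (Y i) : ℝ) with hn
  calc ∑ y0 : ∀ j, Y j, ∑ y1 : ∀ j, Y j, ∑ a : Y i, ∑ b : Y i,
          f (Function.update y0 i a) (Function.update y1 i b)
      = ∑ y0 : ∀ j, Y j, ∑ a : Y i, ∑ y1 : ∀ j, Y j, ∑ b : Y i,
          f (Function.update y0 i a) (Function.update y1 i b) := by
        exact Finset.sum_congr rfl fun y0 _ => Finset.sum_comm
    _ = ∑ y0 : ∀ j, Y j, ∑ a : Y i, n * ∑ y1 : ∀ j, Y j, f (Function.update y0 i a) y1 := by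
        exact Finset.sum_congr rfl fun y0 _ => Finset.sum_congr rfl fun a _ =>
          sum_update i (f (Function.update y0 i a))
    _ = n * ∑ y0 : ∀ j, Y j, ∑ a : Y i, ∑ y1 : ∀ j, Y j, f (Function.update y0 i a) y1 := by
        rw [Finset.mul_sum]
        exact Finset.sum_congr rfl fun y0 _ => (Finset.mul_sum _ _ _).symm
    _ = n * (n * ∑ y0 : ∀ j, Y j, ∑ y1 : ∀ j, Y j, f y0 y1) := by
        rw [sum_update i (fun y0 => ∑ y1 : ∀ j, Y j, f y0 y1)]
    _ = n^2 * ∑ y0 : ∀ j, Y j, ∑ y1 : ∀ j, Y j, f y0 y1 := by ring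

section Main

variable [Fintype X] [∀ i, Fintype (Y i)]
variable (F : X × (∀ i, Y i) → ℝ) (Γ0 : Set (X × (∀ i, Y i)))
  (ΓY : Fin k → Set (X × (∀ i, Y i)))

/-- the function whose product is taken -/
noncomputable def gfun (s : Finset (Fin k)) (x : X) (y : ∀ i, Y i) : ℝ :=
  F (x, y) * (Γ0.indicator (fun _ => (1:ℝ)) (x, y) *
    ∏ j ∈ sᶜ, (ΓY j).indicator (fun _ => (1:ℝ)) (x, y))

noncomputable def Gfun (s : Finset (Fin k)) (x : X) (y0 y1 : ∀ i, Y i) : ℝ :=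
  ∏ u ∈ USet k s, gfun F Γ0 ΓY s x (mrg y0 y1 u)

noncomputable def Sval (s : Finset (Fin k)) : ℝ :=
  ∑ x : X, ∑ y0 : ∀ i, Y i, ∑ y1 : ∀ i, Y i, Gfun F Γ0 ΓY s x y0 y1

noncomputable def Bfun (i : Fin k) (s : Finset (Fin k)) (x : X) (y0 y1 : ∀ i, Y i) : ℝ :=
  ∏ u ∈ USet k s, (ΓY i).indicator (fun _ => (1:ℝ)) (x, mrg y0 y1 u)

noncomputable def Cfun (i : Fin k) (s : Finset (Fin k)) (x : X) (y0 y1 : ∀ i, Y i) : ℝ :=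
  ∏ u ∈ USet k s, gfun F Γ0 ΓY (insert i s) x (mrg y0 y1 u)

variable {i : Fin k} {s : Finset (Fin k)}

lemma gsplit (hi : i ∉ s) (x : X) (y : ∀ i, Y i) :
    gfun F Γ0 ΓY s x y
      = (ΓY i).indicator (fun _ => (1:ℝ)) (x, y) * gfun F Γ0 ΓY (insert i s) x y := by
  unfold gfun
  rw [Finset.compl_insert, ← Finset.mul_prod_erase sᶜ _ (Finset.mem_compl.2 hi)]
  ring

lemma prodsplit (hi : i ∉ s) (x : X) (y0 y1 : ∀ i, Y i) :
    Gfun F Γ0 ΓY s x y0 y1 = Bfun ΓY i s x y0 y1 * Cfun F Γ0 ΓY i s x y0 y1 := by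
  unfold Gfun Bfun Cfun
  rw [← Finset.prod_mul_distrib]
  exact Finset.prod_congr rfl fun u hu => gsplit F Γ0 ΓY hi x (mrg y0 y1 u)

lemma Bfun_nonneg (x : X) (y0 y1 : ∀ i, Y i) : 0 ≤ Bfun ΓY i s x y0 y1 :=
  Finset.prod_nonneg fun u _ => ind_nonneg _ _

lemma Bfun_le_one (x : X) (y0 y1 : ∀ i, Y i) : Bfun ΓY i s x y0 y1 ≤ 1 :=
  Finset.prod_le_one (fun u _ => ind_nonneg _ _) (fun u _ => ind_le_one _ _)

lemma Bfun_upd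
    (hΓY : ∀ (i : Fin k) x y y', (∀ j, j ≠ i → y j = y' j) →
      ((x, y) ∈ ΓY i ↔ (x, y') ∈ ΓY i))
    (hi : i ∉ s) (x : X) (y0 y1 : ∀ i, Y i) (a : Y i) :
    Bfun ΓY i s x (Function.update y0 i a) y1 = Bfun ΓY i s x y0 y1 := by
  unfold Bfun
  refine Finset.prod_congr rfl fun u hu => ?_
  rw [mrg_upd_left y0 y1 ((mem_USet.1 hu) i hi) a]
  exact ind_congr (hΓY i x _ _ (fun j hj => Function.update_of_ne hj a _))

lemma Cfun_mul (hi : i ∉ s) (x : X) (y0 y1 : ∀ i, Y i) (a b : Y i) :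
    Cfun F Γ0 ΓY i s x (Function.update y0 i a) y1
        * Cfun F Γ0 ΓY i s x (Function.update y0 i b) y1
      = Gfun F Γ0 ΓY (insert i s) x (Function.update y0 i a) (Function.update y1 i b) := by
  unfold Gfun Cfun
  rw [prod_USet_insert hi, ← Finset.prod_mul_distrib]
  refine Finset.prod_congr rfl fun u hu => ?_
  have hui : u i = false := (mem_USet.1 hu) i hi
  rw [mrg_upd_left y0 y1 hui a, mrg_upd_left y0 y1 hui b,
    mrg_upd_both_false y0 y1 hui a b, mrg_upd_both_true y0 y1 u a b]

lemma Sval_step [∀ i, Nonempty (Y i)]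
    (hΓY : ∀ (i : Fin k) x y y', (∀ j, j ≠ i → y j = y' j) →
      ((x, y) ∈ ΓY i ↔ (x, y') ∈ ΓY i))
    (hi : i ∉ s) :
    (Sval F Γ0 ΓY s)^2
      ≤ ((Fintype.card X : ℝ) * (∏ j, (Fintype.card (Y j) : ℝ))^2)
        * Sval F Γ0 ΓY (insert i s) := by
  set n : ℝ := (Fintype.card (Y i) : ℝ) with hn
  have hnpos : 0 < n := by
    rw [hn]
    exact_mod_cast Fintype.card_pos
  set K : ℝ := (Fintype.card X : ℝ) * (∏ j, (Fintype.card (Y j) : ℝ))^2 with hK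
  set D : X → (∀ j, Y j) → (∀ j, Y j) → ℝ :=
    fun x y0 y1 => ∑ a : Y i, Cfun F Γ0 ΓY i s x (Function.update y0 i a) y1 with hD
  -- key 1
  have key1 : n * Sval F Γ0 ΓY s
      = ∑ x : X, ∑ y0 : ∀ j, Y j, ∑ y1 : ∀ j, Y j,
          Bfun ΓY i s x y0 y1 * D x y0 y1 := by
    calc n * Sval F Γ0 ΓY s
        = ∑ x : X, n * ∑ y0 : ∀ j, Y j, ∑ y1 : ∀ j, Y j,
            Bfun ΓY i s x y0 y1 * Cfun F Γ0 ΓY i s x y0 y1 := by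
          unfold Sval
          rw [Finset.mul_sum]
          refine Finset.sum_congr rfl fun x _ => ?_
          congr 1
          refine Finset.sum_congr rfl fun y0 _ => Finset.sum_congr rfl fun y1 _ => ?_
          exact prodsplit F Γ0 ΓY hi x y0 y1
      _ = ∑ x : X, ∑ y0 : ∀ j, Y j, ∑ a : Y i, ∑ y1 : ∀ j, Y j,
            Bfun ΓY i s x (Function.update y0 i a) y1
              * Cfun F Γ0 ΓY i s x (Function.update y0 i a) y1 := by
          refine Finset.sum_congr rfl fun x _ => ?_
          rw [← sum_update i (fun y0 => ∑ y1 : ∀ j, Y j,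
            Bfun ΓY i s x y0 y1 * Cfun F Γ0 ΓY i s x y0 y1)]
      _ = ∑ x : X, ∑ y0 : ∀ j, Y j, ∑ y1 : ∀ j, Y j, ∑ a : Y i,
            Bfun ΓY i s x y0 y1 * Cfun F Γ0 ΓY i s x (Function.update y0 i a) y1 := by
          refine Finset.sum_congr rfl fun x _ => Finset.sum_congr rfl fun y0 _ => ?_
          rw [Finset.sum_comm]
          exact Finset.sum_congr rfl fun y1 _ => Finset.sum_congr rfl fun a _ => by
            rw [Bfun_upd ΓY hΓY hi]
      _ = ∑ x : X, ∑ y0 : ∀ j, Y j, ∑ y1 : ∀ j, Y j,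
            Bfun ΓY i s x y0 y1 * D x y0 y1 := by
          refine Finset.sum_congr rfl fun x _ => Finset.sum_congr rfl fun y0 _ =>
            Finset.sum_congr rfl fun y1 _ => ?_
          rw [hD, ← Finset.mul_sum]
  -- key 2
  have key2 : ∑ x : X, ∑ y0 : ∀ j, Y j, ∑ y1 : ∀ j, Y j, (D x y0 y1)^2
      = n^2 * Sval F Γ0 ΓY (insert i s) := by
    unfold Sval
    rw [Finset.mul_sum]
    refine Finset.sum_congr rfl fun x _ => ?_
    calc ∑ y0 : ∀ j, Y j, ∑ y1 : ∀ j, Y j, (D x y0 y1)^2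
        = ∑ y0 : ∀ j, Y j, ∑ y1 : ∀ j, Y j, ∑ a : Y i, ∑ b : Y i,
            Gfun F Γ0 ΓY (insert i s) x (Function.update y0 i a)
              (Function.update y1 i b) := by
          refine Finset.sum_congr rfl fun y0 _ => Finset.sum_congr rfl fun y1 _ => ?_
          rw [hD, sq, Finset.sum_mul_sum]
          exact Finset.sum_congr rfl fun a _ => Finset.sum_congr rfl fun b _ =>
            Cfun_mul F Γ0 ΓY hi x y0 y1 a b
      _ = n^2 * ∑ y0 : ∀ j, Y j, ∑ y1 : ∀ j, Y j,
            Gfun F Γ0 ΓY (insert i s) x y0 y1 :=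
          sum_update2 i (fun y0 y1 => Gfun F Γ0 ΓY (insert i s) x y0 y1)
  -- key 3 : Cauchy-Schwarz
  have flat : ∀ (h : X → (∀ j, Y j) → (∀ j, Y j) → ℝ),
      ∑ w : X × ((∀ j, Y j) × (∀ j, Y j)), h w.1 w.2.1 w.2.2
        = ∑ x : X, ∑ y0 : ∀ j, Y j, ∑ y1 : ∀ j, Y j, h x y0 y1 := by
    intro h
    rw [Fintype.sum_prod_type]
    exact Finset.sum_congr rfl fun x _ =>
      Fintype.sum_prod_type (f := fun p : (∀ j, Y j) × (∀ j, Y j) => h x p.1 p.2)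
  have hBsq : ∑ w : X × ((∀ j, Y j) × (∀ j, Y j)),
      (Bfun ΓY i s w.1 w.2.1 w.2.2)^2 ≤ K := by
    have hcard : ((Fintype.card (X × ((∀ j, Y j) × (∀ j, Y j))) : ℕ) : ℝ) = K := by
      rw [hK]
      push_cast [Fintype.card_prod, Fintype.card_pi]
      ring
    calc ∑ w : X × ((∀ j, Y j) × (∀ j, Y j)), (Bfun ΓY i s w.1 w.2.1 w.2.2)^2
        ≤ ∑ _w : X × ((∀ j, Y j) × (∀ j, Y j)), (1:ℝ) := by
          refine Finset.sum_le_sum fun w _ => ?_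
          exact pow_le_one₀ (Bfun_nonneg ΓY _ _ _) (Bfun_le_one ΓY _ _ _)
      _ = K := by rw [Finset.sum_const, Finset.card_univ, nsmul_eq_mul, mul_one, hcard]
  have hCS : (n * Sval F Γ0 ΓY s)^2
      ≤ K * (n^2 * Sval F Γ0 ΓY (insert i s)) := by
    rw [key1, ← flat (fun x y0 y1 => Bfun ΓY i s x y0 y1 * D x y0 y1), ← key2,
      ← flat (fun x y0 y1 => (D x y0 y1)^2)]
    calc (∑ w : X × ((∀ j, Y j) × (∀ j, Y j)),
            Bfun ΓY i s w.1 w.2.1 w.2.2 * D w.1 w.2.1 w.2.2)^2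
        ≤ (∑ w : X × ((∀ j, Y j) × (∀ j, Y j)), (Bfun ΓY i s w.1 w.2.1 w.2.2)^2)
            * ∑ w : X × ((∀ j, Y j) × (∀ j, Y j)), (D w.1 w.2.1 w.2.2)^2 :=
          Finset.sum_mul_sq_le_sq_mul_sq _ _ _
      _ ≤ K * ∑ w : X × ((∀ j, Y j) × (∀ j, Y j)), (D w.1 w.2.1 w.2.2)^2 := by
          refine mul_le_mul_of_nonneg_right hBsq ?_
          exact Finset.sum_nonneg fun w _ => sq_nonneg _
  have h2 : n^2 * (Sval F Γ0 ΓY s)^2 ≤ n^2 * (K * Sval F Γ0 ΓY (insert i s)) := by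
    calc n^2 * (Sval F Γ0 ΓY s)^2 = (n * Sval F Γ0 ΓY s)^2 := by ring
      _ ≤ K * (n^2 * Sval F Γ0 ΓY (insert i s)) := hCS
      _ = n^2 * (K * Sval F Γ0 ΓY (insert i s)) := by ring
  exact le_of_mul_le_mul_left h2 (by positivity)

lemma gfun_empty (Γ : Set (X × (∀ i, Y i))) (hΓ : Γ = Γ0 ∩ ⋂ i, ΓY i)
    (x : X) (y : ∀ i, Y i) :
    gfun F Γ0 ΓY (∅ : Finset (Fin k)) x y
      = F (x, y) * Γ.indicator (fun _ => (1:ℝ)) (x, y) := by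
  unfold gfun
  rw [Finset.compl_empty]
  congr 1
  by_cases h0 : (x, y) ∈ Γ0
  · by_cases hall : ∀ j, (x, y) ∈ ΓY j
    · have hmem : (x, y) ∈ Γ := by
        rw [hΓ]; exact ⟨h0, Set.mem_iInter.2 hall⟩
      rw [Set.indicator_of_mem h0, Set.indicator_of_mem hmem,
        Finset.prod_congr rfl (fun j _ => Set.indicator_of_mem (hall j) _)]
      simp
    · push_neg at hall
      obtain ⟨j, hj⟩ := hall
      have hnot : (x, y) ∉ Γ := by
        rw [hΓ]; rintro ⟨-, hI⟩; exact hj (Set.mem_iInter.1 hI j)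
      rw [Set.indicator_of_notMem hnot,
        Finset.prod_eq_zero (Finset.mem_univ j) (Set.indicator_of_notMem hj _),
        mul_zero]
  · have hnot : (x, y) ∉ Γ := by
      rw [hΓ]; rintro ⟨h, -⟩; exact h0 h
    rw [Set.indicator_of_notMem hnot, Set.indicator_of_notMem h0, zero_mul]

lemma Sval_empty (Γ : Set (X × (∀ i, Y i))) (hΓ : Γ = Γ0 ∩ ⋂ i, ΓY i) :
    Sval F Γ0 ΓY (∅ : Finset (Fin k))
      = (∏ i, (Fintype.card (Y i) : ℝ)) * ∑ x : X, ∑ y : ∀ i, Y i,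
          F (x, y) * Γ.indicator (fun _ => (1:ℝ)) (x, y) := by
  unfold Sval Gfun
  rw [Finset.mul_sum]
  refine Finset.sum_congr rfl fun x _ => ?_
  rw [Finset.mul_sum]
  refine Finset.sum_congr rfl fun y0 _ => ?_
  calc ∑ y1 : ∀ i, Y i, ∏ u ∈ USet k ∅, gfun F Γ0 ΓY ∅ x (mrg y0 y1 u)
      = ∑ _y1 : ∀ i, Y i, F (x, y0) * Γ.indicator (fun _ => (1:ℝ)) (x, y0) := by
        refine Finset.sum_congr rfl fun y1 _ => ?_
        rw [USet_empty, Finset.prod_singleton, mrg_false, gfun_empty F Γ0 ΓY Γ hΓ]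
    _ = (∏ i, (Fintype.card (Y i) : ℝ))
          * (F (x, y0) * Γ.indicator (fun _ => (1:ℝ)) (x, y0)) := by
        rw [Finset.sum_const, Finset.card_univ, nsmul_eq_mul, Fintype.card_pi]
        push_cast
        ring

lemma Sval_univ_le [Nonempty X]
    (hΓ0 : ∀ x x' y, ((x, y) ∈ Γ0 ↔ (x', y) ∈ Γ0)) :
    Sval F Γ0 ΓY (Finset.univ : Finset (Fin k))
      ≤ ∑ y0 : ∀ i, Y i, ∑ y1 : ∀ i, Y i,
          |∑ x : X, ∏ u : Fin k → Bool, F (x, mrg y0 y1 u)| := by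
  obtain ⟨x₀⟩ := (inferInstance : Nonempty X)
  unfold Sval
  rw [sum_rotate (fun x y0 y1 => Gfun F Γ0 ΓY Finset.univ x y0 y1)]
  refine Finset.sum_le_sum fun y0 _ => Finset.sum_le_sum fun y1 _ => ?_
  have hG : ∀ x : X, Gfun F Γ0 ΓY Finset.univ x y0 y1
      = (∏ u : Fin k → Bool, F (x, mrg y0 y1 u)) *
        (∏ u : Fin k → Bool, Γ0.indicator (fun _ => (1:ℝ)) (x₀, mrg y0 y1 u)) := by
    intro x
    unfold Gfun gfun
    rw [USet_univ, ← Finset.prod_mul_distrib]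
    refine Finset.prod_congr rfl fun u _ => ?_
    rw [Finset.compl_univ, Finset.prod_empty, mul_one]
    congr 1
    exact ind_congr (hΓ0 x x₀ (mrg y0 y1 u))
  set c : ℝ := ∏ u : Fin k → Bool, Γ0.indicator (fun _ => (1:ℝ)) (x₀, mrg y0 y1 u) with hc
  have hc0 : 0 ≤ c := Finset.prod_nonneg fun u _ => ind_nonneg _ _
  have hc1 : c ≤ 1 :=
    Finset.prod_le_one (fun u _ => ind_nonneg _ _) (fun u _ => ind_le_one _ _)
  calc ∑ x : X, Gfun F Γ0 ΓY Finset.univ x y0 y1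
      = (∑ x : X, ∏ u : Fin k → Bool, F (x, mrg y0 y1 u)) * c := by
        rw [Finset.sum_mul]
        exact Finset.sum_congr rfl fun x _ => hG x
    _ ≤ |∑ x : X, ∏ u : Fin k → Bool, F (x, mrg y0 y1 u)| * c :=
        mul_le_mul_of_nonneg_right (le_abs_self _) hc0
    _ ≤ |∑ x : X, ∏ u : Fin k → Bool, F (x, mrg y0 y1 u)| * 1 :=
        mul_le_mul_of_nonneg_left hc1 (abs_nonneg _)
    _ = |∑ x : X, ∏ u : Fin k → Bool, F (x, mrg y0 y1 u)| := mul_one _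

end Main

end BNSaux

/-- the standard BNS argument. -/
theorem bns_argument (k : ℕ) (hk : 1 ≤ k)
    (X : Type) (Y : Fin k → Type)
    [Fintype X] [Nonempty X] [∀ i, Fintype (Y i)] [∀ i, Nonempty (Y i)]
    (F : X × (∀ i, Y i) → ℝ) (hF : ∀ z, F z = 1 ∨ F z = -1)
    (Γ Γ0 : Set (X × (∀ i, Y i))) (ΓY : Fin k → Set (X × (∀ i, Y i)))
    (hΓ0 : ∀ x x' y, (x, y) ∈ Γ0 ↔ (x', y) ∈ Γ0)
    (hΓY : ∀ (i : Fin k) x y y', (∀ j, j ≠ i → y j = y' j) →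
      ((x, y) ∈ ΓY i ↔ (x, y') ∈ ΓY i))
    (hΓ : Γ = Γ0 ∩ ⋂ i, ΓY i) :
    ((∑ x : X, ∑ y : ∀ i, Y i, F (x, y) * Γ.indicator (fun _ => (1 : ℝ)) (x, y)) /
        ((Fintype.card X : ℝ) * ∏ i, (Fintype.card (Y i) : ℝ))) ^ (2 ^ k)
      ≤ (∑ y0 : ∀ i, Y i, ∑ y1 : ∀ i, Y i,
          |(∑ x : X, ∏ u : Fin k → Bool,
              F (x, fun i => if u i then y1 i else y0 i)) / (Fintype.card X : ℝ)|) /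
        ((∏ i, (Fintype.card (Y i) : ℝ)) ^ 2) := by
  classical
  have hX : (0:ℝ) < (Fintype.card X : ℝ) := by exact_mod_cast Fintype.card_pos
  have hP : (0:ℝ) < ∏ i, (Fintype.card (Y i) : ℝ) :=
    Finset.prod_pos fun i _ => by exact_mod_cast Fintype.card_pos
  set N : ℝ := (Fintype.card X : ℝ) * (∏ i, (Fintype.card (Y i) : ℝ))^2 with hN
  have hNpos : 0 < N := by positivity
  have ind : ∀ s : Finset (Fin k), s.Nonempty →
      (BNSaux.Sval F Γ0 ΓY ∅ / N) ^ (2 ^ s.card) ≤ BNSaux.Sval F Γ0 ΓY s / N := by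
    intro s
    induction s using Finset.induction_on with
    | empty => exact fun h => absurd h (by simp)
    | @insert i s hi ih =>
      intro _
      have hstep := BNSaux.Sval_step F Γ0 ΓY hΓY hi
      rw [← hN] at hstep
      have hdiv : (BNSaux.Sval F Γ0 ΓY s / N)^2
          ≤ BNSaux.Sval F Γ0 ΓY (insert i s) / N := by
        rw [div_pow, div_le_div_iff₀ (by positivity) hNpos]
        calc (BNSaux.Sval F Γ0 ΓY s)^2 * N
            ≤ (N * BNSaux.Sval F Γ0 ΓY (insert i s)) * N :=
              mul_le_mul_of_nonneg_right hstep hNpos.le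
          _ = BNSaux.Sval F Γ0 ΓY (insert i s) * N^2 := by ring
      rw [Finset.card_insert_of_notMem hi]
      rcases Finset.eq_empty_or_nonempty s with rfl | hs
      · simpa using hdiv
      · have ha := ih hs
        have hnn : 0 ≤ (BNSaux.Sval F Γ0 ΓY ∅ / N) ^ (2 ^ s.card) := by
          obtain ⟨d, hd⟩ := Nat.exists_eq_succ_of_ne_zero
            (Nat.pos_iff_ne_zero.1 (Finset.card_pos.2 hs))
          rw [hd, pow_succ, pow_mul]
          exact sq_nonneg _
        calc (BNSaux.Sval F Γ0 ΓY ∅ / N) ^ (2 ^ (s.card + 1))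
            = ((BNSaux.Sval F Γ0 ΓY ∅ / N) ^ (2 ^ s.card))^2 := by
              rw [← pow_mul, pow_succ]
          _ ≤ (BNSaux.Sval F Γ0 ΓY s / N)^2 := pow_le_pow_left₀ hnn ha 2
          _ ≤ BNSaux.Sval F Γ0 ΓY (insert i s) / N := hdiv
  haveI : Nonempty (Fin k) := ⟨⟨0, hk⟩⟩
  have main := ind Finset.univ Finset.univ_nonempty
  rw [Finset.card_univ, Fintype.card_fin] at main
  have hbase : BNSaux.Sval F Γ0 ΓY ∅ / N
      = (∑ x : X, ∑ y : ∀ i, Y i, F (x, y) * Γ.indicator (fun _ => (1 : ℝ)) (x, y)) /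
          ((Fintype.card X : ℝ) * ∏ i, (Fintype.card (Y i) : ℝ)) := by
    rw [BNSaux.Sval_empty F Γ0 ΓY Γ hΓ, hN]
    field_simp
  have hfinal : BNSaux.Sval F Γ0 ΓY (Finset.univ : Finset (Fin k)) / N
      ≤ (∑ y0 : ∀ i, Y i, ∑ y1 : ∀ i, Y i,
          |(∑ x : X, ∏ u : Fin k → Bool,
              F (x, fun i => if u i then y1 i else y0 i)) / (Fintype.card X : ℝ)|) /
        ((∏ i, (Fintype.card (Y i) : ℝ)) ^ 2) := by
    have habs : ∀ y0 y1 : ∀ i, Y i,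
        |(∑ x : X, ∏ u : Fin k → Bool,
            F (x, fun i => if u i then y1 i else y0 i)) / (Fintype.card X : ℝ)|
          = |∑ x : X, ∏ u : Fin k → Bool, F (x, BNSaux.mrg y0 y1 u)|
              / (Fintype.card X : ℝ) := by
      intro y0 y1
      rw [abs_div, abs_of_pos hX]
      rfl
    have hrhs : (∑ y0 : ∀ i, Y i, ∑ y1 : ∀ i, Y i,
          |(∑ x : X, ∏ u : Fin k → Bool,
              F (x, fun i => if u i then y1 i else y0 i)) / (Fintype.card X : ℝ)|) /
        ((∏ i, (Fintype.card (Y i) : ℝ)) ^ 2)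
        = (∑ y0 : ∀ i, Y i, ∑ y1 : ∀ i, Y i,
            |∑ x : X, ∏ u : Fin k → Bool, F (x, BNSaux.mrg y0 y1 u)|) / N := by
      rw [hN]
      rw [Finset.sum_congr rfl (fun y0 _ => Finset.sum_congr rfl fun y1 _ => habs y0 y1)]
      rw [Finset.sum_congr rfl (fun y0 _ => (Finset.sum_div _ _ _).symm), ← Finset.sum_div]
      rw [div_div]
    rw [hrhs]
    exact (div_le_div_iff_of_pos_right hNpos).2 (BNSaux.Sval_univ_le F Γ0 ΓY hΓ0)
  calc ((∑ x : X, ∑ y : ∀ i, Y i, F (x, y) * Γ.indicator (fun _ => (1 : ℝ)) (x, y)) /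
        ((Fintype.card X : ℝ) * ∏ i, (Fintype.card (Y i) : ℝ))) ^ (2 ^ k)
      = (BNSaux.Sval F Γ0 ΓY ∅ / N) ^ (2 ^ k) := by rw [hbase]
    _ ≤ BNSaux.Sval F Γ0 ΓY (Finset.univ : Finset (Fin k)) / N := main
    _ ≤ _ := hfinal
end

section
/- Let f : {0,1}^m → {−1,1}, let 0 < δ′ < 1 and let d ≥ 1. Suppose that every function h : {0,1}^m → ℝ of exact degree less than d satisfies max_{x∈{0,1}^m} |f(x) − h(x)| > δ′ (i.e., the δ′-approximate degree of f is at least d). Then there exist a function g : {0,1}^m → {−1,1} and a distribution μ on {0,1}^m such that (i) corr_μ(g,f) ≥ δ′, and (ii) for every T ⊆ {1,…,m} with |T| < d and every function h : {0,1}^{|T|} → ℝ, ∑_{x∈{0,1}^m} μ(x)·g(x)·h(x|T) = 0. -/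
/-- The substring of `x` indexed by the elements of `T` in increasing order. -/
noncomputable def restrict {m : ℕ} (x : Fin m → Bool) (T : Finset (Fin m)) :
    Fin T.card → Bool :=
  fun i => x ((T.orderIsoOfFin rfl i).1)

/-- The Fourier character of the set `T`: `χ_T(x) = (-1)^{∑_{i ∈ T} x_i}`. -/
noncomputable def chi {m : ℕ} (T : Finset (Fin m)) (x : Fin m → Bool) : ℝ :=
  (-1) ^ (∑ i ∈ T, (if x i then 1 else 0) : ℕ)

lemma chi_update_flip {m : ℕ} (T : Finset (Fin m)) (i : Fin m) (hi : i ∈ T)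
    (x : Fin m → Bool) : chi T (Function.update x i (!x i)) = - chi T x := by
  unfold chi
  rw [← Finset.add_sum_erase _ _ hi, ← Finset.add_sum_erase _ (fun j => (if x j then 1 else 0 : ℕ)) hi]
  have hrest : ∑ j ∈ T.erase i, (if Function.update x i (!x i) j then 1 else 0 : ℕ)
      = ∑ j ∈ T.erase i, (if x j then 1 else 0 : ℕ) := by
    refine Finset.sum_congr rfl fun j hj => ?_
    rw [Function.update_of_ne (Finset.ne_of_mem_erase hj)]
  rw [hrest, Function.update_self]
  cases hx : x i <;> simp [pow_succ] <;> ring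

lemma gen_vanish {m d : ℕ} (T : Finset (Fin m)) (h : (Fin T.card → Bool) → ℝ)
    (hT : T.card < d) (T' : Finset (Fin m)) (hT' : d ≤ T'.card) :
    ∑ x : Fin m → Bool, h (restrict x T) * chi T' x = 0 := by
  classical
  obtain ⟨i, hiT', hiT⟩ : ∃ i, i ∈ T' ∧ i ∉ T := by
    by_contra hc
    push_neg at hc
    have hsub : T' ⊆ T := fun j hj => hc j hj
    have := Finset.card_le_card hsub
    omega
  refine Finset.sum_ninvolution (fun x => Function.update x i (!x i)) ?_ ?_
    (fun x => Finset.mem_univ _) ?_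
  · intro x
    have h1 : restrict (Function.update x i (!x i)) T = restrict x T := by
      funext j
      exact Function.update_of_ne
        (fun he => hiT (by rw [← he]; exact (T.orderIsoOfFin rfl j).2)) _ _
    rw [h1, chi_update_flip T' i hiT' x]
    ring
  · intro x _ heq
    have this : Function.update x i (!x i) i = x i := congrFun heq i
    rw [Function.update_self] at this
    cases hx : x i <;> rw [hx] at this <;> simp at this
  · intro x
    funext j
    by_cases hj : j = i
    · subst hj; simp
    · simp [Function.update_of_ne hj]

lemma span_vanish {m d : ℕ} (u : (Fin m → Bool) → ℝ)
    (hu : u ∈ Submodule.span ℝ {v : (Fin m → Bool) → ℝ |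
      ∃ T : Finset (Fin m), ∃ h : (Fin T.card → Bool) → ℝ,
        T.card < d ∧ v = fun x => h (restrict x T)}) :
    ∀ T' : Finset (Fin m), d ≤ T'.card →
      ∑ x : Fin m → Bool, u x * chi T' x = 0 := by
  induction hu using Submodule.span_induction with
  | mem v hv =>
      obtain ⟨T, h, hT, rfl⟩ := hv
      exact fun T' hT' => gen_vanish T h hT T' hT'
  | zero => intro T' _; simp
  | add v w _ _ hv hw =>
      intro T' hT'
      have : ∑ x : Fin m → Bool, (v + w) x * chi T' x
          = (∑ x : Fin m → Bool, v x * chi T' x) + ∑ x : Fin m → Bool, w x * chi T' x := by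
        rw [← Finset.sum_add_distrib]
        exact Finset.sum_congr rfl fun x _ => by simp [add_mul]
      rw [this, hv T' hT', hw T' hT', add_zero]
  | smul c v _ hv =>
      intro T' hT'
      have : ∑ x : Fin m → Bool, (c • v) x * chi T' x
          = c * ∑ x : Fin m → Bool, v x * chi T' x := by
        rw [Finset.mul_sum]
        exact Finset.sum_congr rfl fun x _ => by simp [mul_assoc]
      rw [this, hv T' hT', mul_zero]

/-- the Orthogonality Lemma.  If the `δ'`-approximate degree of
`f : {0,1}^m → {-1,1}` is at least `d` (i.e. every `h` whose Fourier coefficients vanish on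
all sets of size `≥ d` is at `sup` distance more than `δ'` from `f`), then there are a sign
function `g` and a distribution `μ` with `corr_μ(g,f) ≥ δ'` such that `μ·g` is orthogonal to
every function depending on fewer than `d` of the coordinates. -/
theorem orthogonality_lemma (m d : ℕ) (hd : 1 ≤ d) (δ' : ℝ) (hδ0 : 0 < δ') (hδ1 : δ' < 1)
    (f : (Fin m → Bool) → ℝ) (hf : ∀ x, f x = 1 ∨ f x = -1)
    (happrox : ∀ h : (Fin m → Bool) → ℝ,
      (∀ T : Finset (Fin m), d ≤ T.card → (∑ x : Fin m → Bool, h x * chi T x) = 0) →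
      ∃ x, δ' < |f x - h x|) :
    ∃ (g : (Fin m → Bool) → ℝ) (μ : (Fin m → Bool) → ℝ),
      (∀ x, g x = 1 ∨ g x = -1) ∧
      (∀ x, 0 ≤ μ x) ∧ (∑ x : Fin m → Bool, μ x) = 1 ∧
      δ' ≤ (∑ x : Fin m → Bool, μ x * g x * f x) ∧
      (∀ T : Finset (Fin m), T.card < d →
        ∀ h : (Fin T.card → Bool) → ℝ,
          (∑ x : Fin m → Bool, μ x * g x * h (restrict x T)) = 0) := by
  classical
  set Φ : Submodule ℝ ((Fin m → Bool) → ℝ) :=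
    Submodule.span ℝ {v : (Fin m → Bool) → ℝ |
      ∃ T : Finset (Fin m), ∃ h : (Fin T.card → Bool) → ℝ,
        T.card < d ∧ v = fun x => h (restrict x T)} with hΦdef
  haveI : IsClosed (Φ : Set ((Fin m → Bool) → ℝ)) := Φ.closed_of_finiteDimensional
  -- every element of Φ is far from f
  have hdist : ∀ u ∈ Φ, ∃ x, δ' < |f x - u x| := fun u hu =>
    happrox u (span_vanish u hu)
  have hmkf : (Submodule.Quotient.mk f : _ ⧸ Φ) ≠ 0 := by
    intro h0
    obtain ⟨x, hx⟩ := hdist f ((Submodule.Quotient.mk_eq_zero Φ).1 h0)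
    simp at hx
    linarith
  obtain ⟨γ, hγ1, hγ2⟩ := exists_dual_vector ℝ (Submodule.Quotient.mk f : _ ⧸ Φ) (norm_ne_zero_iff.mpr hmkf)
  set ψs : ((Fin m → Bool) → ℝ) →ₗ[ℝ] ℝ := γ.toLinearMap.comp Φ.mkQ with hψsdef
  have hψs_apply : ∀ u, ψs u = γ (Submodule.Quotient.mk u) := fun u => rfl
  have hψs_Φ : ∀ u ∈ Φ, ψs u = 0 := by
    intro u hu
    rw [hψs_apply, (Submodule.Quotient.mk_eq_zero Φ).2 hu, map_zero]
  have hψs_bound : ∀ u : (Fin m → Bool) → ℝ, ψs u ≤ ‖u‖ := by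
    intro u
    calc ψs u ≤ |ψs u| := le_abs_self _
    _ = ‖γ (Submodule.Quotient.mk u)‖ := by rw [hψs_apply]; rfl
    _ ≤ ‖γ‖ * ‖(Submodule.Quotient.mk u : _ ⧸ Φ)‖ := γ.le_opNorm _
    _ = ‖(Submodule.Quotient.mk u : _ ⧸ Φ)‖ := by rw [hγ1, one_mul]
    _ ≤ ‖u‖ := Submodule.Quotient.norm_mk_le Φ u
  have hγ2' : γ (Submodule.Quotient.mk f) = ‖(Submodule.Quotient.mk f : _ ⧸ Φ)‖ := by
    exact_mod_cast hγ2
  have hψsf : δ' ≤ ψs f := by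
    rw [hψs_apply, hγ2']
    by_contra hlt
    push_neg at hlt
    obtain ⟨a, ha1, ha2⟩ := Submodule.Quotient.norm_mk_lt
      (Submodule.Quotient.mk f : _ ⧸ Φ) (show (0:ℝ) < δ' - ‖(Submodule.Quotient.mk f : _ ⧸ Φ)‖ by linarith)
    have hmem : f - a ∈ Φ := by
      have : a - f ∈ Φ := (Submodule.Quotient.eq Φ).1 ha1
      simpa using Φ.neg_mem this
    obtain ⟨x, hx⟩ := hdist (f - a) hmem
    have hax : |a x| ≤ ‖a‖ := by
      have := norm_le_pi_norm a x
      simpa using this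
    simp only [Pi.sub_apply, sub_sub_cancel] at hx
    linarith
  -- pointwise representation
  set e : (Fin m → Bool) → (Fin m → Bool) → ℝ :=
    fun z => fun x => if x = z then 1 else 0 with hedef
  set ψ : (Fin m → Bool) → ℝ := fun z => ψs (e z) with hψdef
  have hexpand : ∀ u : (Fin m → Bool) → ℝ, ψs u = ∑ z : Fin m → Bool, u z * ψ z := by
    intro u
    have hu : u = ∑ z : Fin m → Bool, u z • e z := by
      funext x
      simp only [Finset.sum_apply, Pi.smul_apply, hedef, smul_eq_mul, mul_ite, mul_one, mul_zero]
      rw [Finset.sum_ite_eq Finset.univ x u]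
      simp
    calc ψs u = ψs (∑ z : Fin m → Bool, u z • e z) := by rw [← hu]
    _ = ∑ z : Fin m → Bool, u z • ψs (e z) := by
        rw [map_sum]
        exact Finset.sum_congr rfl fun z _ => by rw [map_smul]
    _ = ∑ z : Fin m → Bool, u z * ψ z := rfl
  set s1 : ℝ := ∑ z : Fin m → Bool, |ψ z| with hs1def
  set g : (Fin m → Bool) → ℝ := fun z => if ψ z < 0 then -1 else 1 with hgdef
  have hgψ : ∀ z, g z * ψ z = |ψ z| := by
    intro z
    by_cases hz : ψ z < 0
    · simp [hgdef, hz, abs_of_neg hz]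
    · simp [hgdef, hz, abs_of_nonneg (not_lt.1 hz)]
  have hs1le : s1 ≤ 1 := by
    have h1 : ψs g = s1 := by
      rw [hexpand, hs1def]
      exact Finset.sum_congr rfl fun z _ => hgψ z
    have h2 : ‖g‖ ≤ 1 := by
      rw [pi_norm_le_iff_of_nonneg (by norm_num : (0:ℝ) ≤ 1)]
      intro z
      by_cases hz : ψ z < 0 <;> simp [hgdef, hz]
    calc s1 = ψs g := h1.symm
    _ ≤ ‖g‖ := hψs_bound g
    _ ≤ 1 := h2
  have hfabs : ∀ z, |f z| = 1 := by
    intro z; rcases hf z with h | h <;> rw [h] <;> norm_num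
  have hψsf_le : ψs f ≤ s1 := by
    rw [hexpand, hs1def]
    refine Finset.sum_le_sum fun z _ => ?_
    calc f z * ψ z ≤ |f z * ψ z| := le_abs_self _
    _ = |ψ z| := by rw [abs_mul, hfabs z, one_mul]
  have hs1pos : 0 < s1 := lt_of_lt_of_le hδ0 (le_trans hψsf hψsf_le)
  refine ⟨g, fun z => |ψ z| / s1, ?_, ?_, ?_, ?_, ?_⟩
  · intro z
    by_cases hz : ψ z < 0
    · right; simp [hgdef, hz]
    · left; simp [hgdef, hz]
  · intro z; positivity
  · rw [← Finset.sum_div, ← hs1def, div_self (ne_of_gt hs1pos)]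
  · have hkey : ∀ z, |ψ z| / s1 * g z = ψ z / s1 := by
      intro z
      have habs : |ψ z| * g z = ψ z := by
        by_cases hz : ψ z < 0
        · simp [hgdef, hz, abs_of_neg hz]
        · simp [hgdef, hz, abs_of_nonneg (not_lt.1 hz)]
      rw [div_mul_eq_mul_div, habs]
    have : (∑ x : Fin m → Bool, |ψ x| / s1 * g x * f x) = ψs f / s1 := by
      rw [hexpand, Finset.sum_div]
      refine Finset.sum_congr rfl fun z _ => ?_
      rw [hkey z]
      ring
    rw [this, le_div_iff₀ hs1pos]
    nlinarith
  · intro T hT h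
    have hkey : ∀ z, |ψ z| / s1 * g z = ψ z / s1 := by
      intro z
      have habs : |ψ z| * g z = ψ z := by
        by_cases hz : ψ z < 0
        · simp [hgdef, hz, abs_of_neg hz]
        · simp [hgdef, hz, abs_of_nonneg (not_lt.1 hz)]
      rw [div_mul_eq_mul_div, habs]
    have hmem : (fun x => h (restrict x T)) ∈ Φ :=
      Submodule.subset_span ⟨T, h, hT, rfl⟩
    have h0 : ∑ z : Fin m → Bool, (fun x => h (restrict x T)) z * ψ z = 0 := by
      rw [← hexpand]; exact hψs_Φ _ hmem
    have : (∑ x : Fin m → Bool, |ψ x| / s1 * g x * h (restrict x T))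
        = (∑ z : Fin m → Bool, h (restrict z T) * ψ z) / s1 := by
      rw [Finset.sum_div]
      refine Finset.sum_congr rfl fun z _ => ?_
      rw [hkey z]
      ring
    rw [this]
    simp only at h0
    rw [h0, zero_div]
end

section
/- Let m ≤ n, k ≥ 1 and s > 0. Let S = (S_u : u ∈ {0,1}^k) be a multiset of m-element subsets of {1,…,n} whose number of conflicts satisfies q(S) < s·2^k/2. Then there exists v ∈ {0,1}^k such that |S_v ∩ ∂S| > m − s, where ∂S is the boundary of S. -/
/-- if the multiset `S = (S_u : u ∈ {0,1}^k)` of `m`-element subsets of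
`[1,n]` has number of conflicts `q(S) = m·2^k - |⋃S| < s·2^k/2`, then some set `S_v`
satisfies `|S_v ∩ ∂S| > m - s`, where `∂S` is the boundary of `S`. -/
theorem exists_set_mostly_on_boundary (m n k : ℕ) (hmn : m ≤ n) (hk : 1 ≤ k)
    (s : ℝ) (hs : 0 < s)
    (S : (Fin k → Bool) → Finset (Fin n)) (hS : ∀ u, (S u).card = m)
    (hq : ((m * 2 ^ k - (Finset.univ.biUnion S).card : ℕ) : ℝ) < s * 2 ^ k / 2) :
    ∃ v : Fin k → Bool,
      (m : ℝ) - s <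
        ((S v ∩ (Finset.univ.biUnion S).filter
          (fun a => (Finset.univ.filter (fun u : Fin k → Bool => a ∈ S u)).card = 1)).card
          : ℝ) := by
  by_contra hcon
  push_neg at hcon
  set U := Finset.univ.biUnion S with hU
  set c : Fin n → ℕ := fun a => (Finset.univ.filter (fun u : Fin k → Bool => a ∈ S u)).card with hc
  set B := U.filter (fun a => c a = 1) with hB
  have hsub : ∀ v, S v ⊆ U := fun v a ha => Finset.mem_biUnion.2 ⟨v, Finset.mem_univ v, ha⟩
  have hcpos : ∀ a ∈ U, 1 ≤ c a := by
    intro a ha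
    obtain ⟨u, _, hu⟩ := Finset.mem_biUnion.1 ha
    exact Finset.card_pos.2 ⟨u, Finset.mem_filter.2 ⟨Finset.mem_univ u, hu⟩⟩
  have hsum : ∑ a ∈ U, c a = m * 2 ^ k := by
    calc ∑ a ∈ U, c a
        = ∑ a ∈ U, ∑ u : Fin k → Bool, if a ∈ S u then 1 else 0 := by
          refine Finset.sum_congr rfl fun a _ => ?_
          rw [hc]; exact Finset.card_filter _ _
      _ = ∑ u : Fin k → Bool, ∑ a ∈ U, if a ∈ S u then 1 else 0 := Finset.sum_comm
      _ = ∑ u : Fin k → Bool, (S u).card := by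
          refine Finset.sum_congr rfl fun u _ => ?_
          rw [← Finset.card_filter]
          congr 1
          ext a
          simp only [Finset.mem_filter]
          exact ⟨fun h => h.2, fun h => ⟨hsub u h, h⟩⟩
      _ = m * 2 ^ k := by
          simp [hS, Finset.card_univ, mul_comm]
  have hUle : U.card ≤ m * 2 ^ k := by
    rw [← hsum]
    calc U.card = ∑ a ∈ U, 1 := Finset.card_eq_sum_ones U
      _ ≤ ∑ a ∈ U, c a := Finset.sum_le_sum hcpos
  -- sdiff description
  have hsd : ∀ v, S v \ B = (S v).filter (fun a => ¬ c a = 1) := by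
    intro v
    ext a
    simp only [Finset.mem_sdiff, Finset.mem_filter, hB]
    constructor
    · rintro ⟨h1, h2⟩
      exact ⟨h1, fun hc1 => h2 ⟨hsub v h1, hc1⟩⟩
    · rintro ⟨h1, h2⟩
      exact ⟨h1, fun h => h2 h.2⟩
  have key : ∑ v : Fin k → Bool, (S v \ B).card + 2 * U.card ≤ 2 * (m * 2 ^ k) := by
    have h1 : ∑ v : Fin k → Bool, (S v \ B).card
        = ∑ a ∈ U, (if ¬ c a = 1 then c a else 0) := by
      calc ∑ v : Fin k → Bool, (S v \ B).card
          = ∑ v : Fin k → Bool, ∑ a ∈ U, (if a ∈ S v ∧ ¬ c a = 1 then 1 else 0) := by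
            refine Finset.sum_congr rfl fun v _ => ?_
            rw [hsd v, Finset.card_filter]
            rw [← Finset.sum_filter_add_sum_filter_not U (fun a => a ∈ S v)]
            have : ∑ a ∈ U.filter (fun a => ¬ a ∈ S v), (if a ∈ S v ∧ ¬ c a = 1 then 1 else 0) = 0 := by
              refine Finset.sum_eq_zero fun a ha => ?_
              simp only [Finset.mem_filter] at ha
              simp [ha.2]
            rw [this, add_zero]
            have hfe : U.filter (fun a => a ∈ S v) = S v := by
              ext a
              simp only [Finset.mem_filter]
              exact ⟨fun h => h.2, fun h => ⟨hsub v h, h⟩⟩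
            rw [hfe]
            refine Finset.sum_congr rfl fun a ha => ?_
            simp [ha]
        _ = ∑ a ∈ U, ∑ v : Fin k → Bool, (if a ∈ S v ∧ ¬ c a = 1 then 1 else 0) :=
            Finset.sum_comm
        _ = ∑ a ∈ U, (if ¬ c a = 1 then c a else 0) := by
            refine Finset.sum_congr rfl fun a _ => ?_
            by_cases h : c a = 1
            · simp [h]
            · have hcs : c a = ∑ v : Fin k → Bool, if a ∈ S v then 1 else 0 := by
                rw [hc]; exact Finset.card_filter _ _
              simp only [h, not_false_eq_true, and_true, ↓reduceIte]; exact hcs.symm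
    rw [h1, Finset.card_eq_sum_ones U, ← hsum, Finset.mul_sum, Finset.mul_sum,
      ← Finset.sum_add_distrib]
    refine Finset.sum_le_sum fun a ha => ?_
    by_cases h : c a = 1
    · simp [h]
    · have h2 : 2 ≤ c a := by have := hcpos a ha; omega
      simp only [h, not_false_iff, if_true, mul_one]
      omega
  -- real side
  have hsplit : ∀ v, (S v ∩ B).card + (S v \ B).card = m := by
    intro v
    rw [Finset.card_inter_add_card_sdiff, hS]
  have hlow : ∀ v, s ≤ ((S v \ B).card : ℝ) := by
    intro v
    have h := hcon v
    have h2 : ((S v ∩ B).card : ℝ) + ((S v \ B).card : ℝ) = m := by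
      exact_mod_cast congrArg (Nat.cast : ℕ → ℝ) (hsplit v)
    linarith
  have hsum2 : s * 2 ^ k ≤ ((∑ v : Fin k → Bool, (S v \ B).card : ℕ) : ℝ) := by
    push_cast
    calc s * 2 ^ k = ∑ _v : Fin k → Bool, s / 1 := by
          simp [Finset.card_univ]
          ring
      _ ≤ ∑ v : Fin k → Bool, ((S v \ B).card : ℝ) := by
          refine Finset.sum_le_sum fun v _ => ?_
          simpa using hlow v
  have keyR : ((∑ v : Fin k → Bool, (S v \ B).card : ℕ) : ℝ)
      ≤ 2 * ((m * 2 ^ k - U.card : ℕ) : ℝ) := by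
    have h1 : (m * 2 ^ k - U.card : ℕ) + U.card = m * 2 ^ k := Nat.sub_add_cancel hUle
    have h2 : ∑ v : Fin k → Bool, (S v \ B).card ≤ 2 * (m * 2 ^ k - U.card : ℕ) := by omega
    exact_mod_cast h2
  have : s * 2 ^ k < s * 2 ^ k := by
    calc s * 2 ^ k ≤ ((∑ v : Fin k → Bool, (S v \ B).card : ℕ) : ℝ) := hsum2
      _ ≤ 2 * ((m * 2 ^ k - U.card : ℕ) : ℝ) := keyR
      _ < 2 * (s * 2 ^ k / 2) := by linarith [hq]
      _ = s * 2 ^ k := by ring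
  exact absurd this (lt_irrefl _)
end
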